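/- arXiv:2605.20854 — 5 statements merged into one kernel-verified Lean document; each statement's English description precedes it below -/
import Mathlib

section
/- Let K ≥ 1 and M ≥ 2 be integers, and let Π be a probability measure on ℝ^K such that θ ↦ max_{i∈[K]} |θ_i| is Π-integrable. For π in the probability simplex Δ^{K-1} define J(π) := E_{θ∼Π}[ Σ_{a∈[K]^M} (∏_{m=1}^M π_{a_m}) · max_{m∈[M]} θ_{a_m} ] and, for each arm i, the posterior-averaged marginal expected improvement s̄_i(π) := E_{θ∼Π}[ Σ_{a∈[K]^{M−1}} (∏_{m=1}^{M−1} π_{a_m}) · max(θ_i − max_{m∈[M−1]} θ_{a_m}, 0) ]. If π* maximizes J over Δ^{K-1}, then: (1) for all arms i, j with π*_i > 0 and π*_j > 0, s̄_i(π*) = s̄_j(π*); (2) for all arms j, k with π*_j > 0 and π*_k = 0, s̄_j(π*) ≥ s̄_k(π*). -/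
/-!
`J` is the diagonal `w ↦ Φ(w, …, w)` of the symmetric multilinear form
`Φ(u₀, …, u_{M-1}) = ∑ₐ E[maxₘ θ_{aₘ}] ∏ₘ uₘ(aₘ)`, so by symmetry its gradient at `π` is
`M • G(π)`, where `G_x(π)` contracts the last slot of `Φ` with the basis vector at `x` and the
others with `π`. Since `max (θ_x - t) 0 = max t θ_x - t`, the expected improvement is
`s̄_x(π) = G_x(π) - J_{M-1}(π)`. At a maximizer on the simplex, shifting the mass of an arm `i`
of the support to any arm `j` cannot increase `J` to first order, hence `G_j(π) ≤ G_i(π)`.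
-/

open MeasureTheory

/-- The ReMax objective: posterior expected maximum reward over `M` virtual draws
from the sampling distribution `π`, where repeated occurrences of the same arm
reuse the same posterior sample. -/
noncomputable def remaxJ (K M : ℕ) (P : Measure (Fin K → ℝ)) (π : Fin K → ℝ) : ℝ :=
  ∫ θ, ∑ a : Fin M → Fin K, (∏ m, π (a m)) * (⨆ m, θ (a m)) ∂P

/-- The posterior-averaged marginal expected improvement of arm `i`. -/
noncomputable def remaxSbar (K M : ℕ) (P : Measure (Fin K → ℝ)) (π : Fin K → ℝ)
    (i : Fin K) : ℝ :=
  ∫ θ, ∑ a : Fin (M - 1) → Fin K,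
      (∏ m, π (a m)) * max (θ i - ⨆ m, θ (a m)) 0 ∂P

open Finset

section TensorForm

variable {ι : Type*} [Fintype ι] {n : ℕ}

noncomputable def tensorForm (C : (Fin n → ι) → ℝ) :
    ContinuousMultilinearMap ℝ (fun _ : Fin n => ι → ℝ) ℝ :=
  ∑ a, C a • (ContinuousMultilinearMap.mkPiAlgebra ℝ (Fin n) ℝ).compContinuousLinearMap
    fun m => ContinuousLinearMap.proj (a m)

theorem tensorForm_apply (C : (Fin n → ι) → ℝ) (u : Fin n → ι → ℝ) :
    tensorForm C u = ∑ a, (∏ m, u m (a m)) * C a := by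
  simp [tensorForm, mul_comm]

theorem tensorForm_comp_perm {C : (Fin n → ι) → ℝ}
    (hC : ∀ a (σ : Equiv.Perm (Fin n)), C (a ∘ σ) = C a) (u : Fin n → ι → ℝ)
    (σ : Equiv.Perm (Fin n)) : tensorForm C (u ∘ σ) = tensorForm C u := by
  simp only [tensorForm_apply]
  refine Fintype.sum_equiv (σ.arrowCongr (Equiv.refl ι)) _ _ fun a => ?_
  have hprod := Equiv.prod_comp σ.symm fun m => u (σ m) (a m)
  simp only [Equiv.apply_symm_apply] at hprod
  have hreindex : σ.arrowCongr (Equiv.refl ι) a = a ∘ σ.symm := rfl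
  simp only [hreindex, hC, Function.comp_apply, hprod]

noncomputable def tensorFormGrad (C : (Fin (n + 1) → ι) → ℝ) (w : ι → ℝ) (x : ι) : ℝ :=
  ∑ b : Fin n → ι, (∏ m, w (b m)) * C (Fin.snoc b x)

theorem tensorForm_update_last (C : (Fin (n + 1) → ι) → ℝ) (w v : ι → ℝ) :
    tensorForm C (Function.update (fun _ => w) (Fin.last n) v)
      = ∑ x, v x * tensorFormGrad C w x := by
  rw [tensorForm_apply, ← (Fin.snocEquiv fun _ => ι).sum_comp, Fintype.sum_prod_type]
  refine sum_congr rfl fun x _ => ?_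
  rw [tensorFormGrad, mul_sum]
  refine sum_congr rfl fun b _ => ?_
  simp only [Fin.snocEquiv, Equiv.coe_fn_mk, Fin.prod_univ_castSucc, Fin.snoc_castSucc,
    Fin.snoc_last, ne_eq, Fin.castSucc_ne_last, not_false_eq_true, Function.update_of_ne,
    Function.update_self]
  ring

theorem hasFDerivAt_tensorForm_diag {C : (Fin (n + 1) → ι) → ℝ}
    (hC : ∀ a (σ : Equiv.Perm (Fin (n + 1))), C (a ∘ σ) = C a) (w : ι → ℝ) :
    HasFDerivAt (fun w => tensorForm C fun _ => w)
      (∑ x, ((n + 1 : ℝ) * tensorFormGrad C w x) •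
        ContinuousLinearMap.proj (R := ℝ) (φ := fun _ : ι => ℝ) x) w := by
  have hdiag := (ContinuousLinearMap.pi fun _ : Fin (n + 1) =>
    ContinuousLinearMap.id ℝ (ι → ℝ)).hasFDerivAt (x := w)
  refine (((tensorForm C).hasFDerivAt fun _ => w).comp w hdiag).congr_fderiv
    (ContinuousLinearMap.ext fun v => ?_)
  have hslot : ∀ m, tensorForm C (Function.update (fun _ => w) m v)
      = tensorForm C (Function.update (fun _ => w) (Fin.last n) v) := fun m => by
    rw [← tensorForm_comp_perm hC _ (Equiv.swap m (Fin.last n)), Function.update_comp_equiv]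
    simp only [Equiv.symm_swap, Equiv.swap_apply_left]
    rfl
  simp only [ContinuousLinearMap.comp_apply, ContinuousMultilinearMap.linearDeriv_apply,
    ContinuousLinearMap.pi_apply, ContinuousLinearMap.id_apply, hslot, sum_const, card_univ,
    Fintype.card_fin, tensorForm_update_last]
  simp [mul_sum, mul_comm, mul_assoc]

end TensorForm

theorem le_of_isMaxOn_stdSimplex {ι : Type*} [Fintype ι] [DecidableEq ι] {f : (ι → ℝ) → ℝ}
    {g w : ι → ℝ}
    (hf : HasFDerivAt f (∑ x, g x • ContinuousLinearMap.proj (R := ℝ) (φ := fun _ : ι => ℝ) x) w)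
    (hmax : IsMaxOn f (stdSimplex ℝ ι) w) (hw : w ∈ stdSimplex ℝ ι) {i : ι} (hi : 0 < w i)
    (j : ι) : g j ≤ g i := by
  set d : ι → ℝ := Pi.single j 1 - Pi.single i 1
  have hw' : w + w i • d ∈ stdSimplex ℝ ι := by
    refine ⟨fun x => ?_, ?_⟩
    · have := hw.1 x
      simp only [d, Pi.add_apply, Pi.smul_apply, Pi.sub_apply, Pi.single_apply, smul_eq_mul]
      split_ifs <;> subst_vars <;> linarith
    · simp [d, sum_add_distrib, ← mul_sum, hw.2]
  have hderiv := hmax.localize.hasFDerivWithinAt_nonpos hf.hasFDerivWithinAt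
    (sub_mem_posTangentConeAt_of_segment_subset ((convex_stdSimplex ℝ ι).segment_subset hw hw'))
  have hshift : (∑ x, g x • ContinuousLinearMap.proj (R := ℝ) (φ := fun _ : ι => ℝ) x)
      (w + w i • d - w) = w i * g j - w i * g i := by
    simp [d, Pi.single_apply, mul_sub]
  exact le_of_mul_le_mul_left (sub_nonpos.1 (hshift ▸ hderiv)) hi

section ExpectedMax

variable {ι : Type*} {n : ℕ}

theorem ciSup_comp_snoc {α : Type*} [NeZero n] (f : α → ℝ) (b : Fin n → α) (x : α) :
    ⨆ m, f (Fin.snoc (α := fun _ => α) b x m) = max (⨆ m, f (b m)) (f x) := by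
  have hbdd := Finite.bddAbove_range fun m => f (Fin.snoc (α := fun _ => α) b x m)
  refine le_antisymm (ciSup_le fun m => ?_) (max_le (ciSup_le fun m => ?_) ?_)
  · induction m using Fin.lastCases with
    | last => simp
    | cast m =>
      simpa using le_max_of_le_left (le_ciSup (f := fun m => f (b m)) (Finite.bddAbove_range _) m)
  · simpa using le_ciSup hbdd m.castSucc
  · simpa using le_ciSup hbdd (Fin.last n)

theorem abs_ciSup_comp_le {α β : Type*} [Finite α] [Finite β] [Nonempty β] (f : α → ℝ)
    (a : β → α) : |⨆ m, f (a m)| ≤ ⨆ i, |f i| := by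
  have hle : ∀ m, |f (a m)| ≤ ⨆ i, |f i| := fun m =>
    le_ciSup (f := fun i => |f i|) (Finite.bddAbove_range _) (a m)
  obtain ⟨m₀⟩ := ‹Nonempty β›
  refine abs_le.2 ⟨?_, ciSup_le fun m => (le_abs_self _).trans (hle m)⟩
  calc -(⨆ i, |f i|) ≤ f (a m₀) := neg_le.1 ((neg_le_abs _).trans (hle m₀))
    _ ≤ ⨆ m, f (a m) := le_ciSup (f := fun m => f (a m)) (Finite.bddAbove_range _) m₀

noncomputable def expectedMax (P : Measure (ι → ℝ)) (a : Fin n → ι) : ℝ :=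
  ∫ θ, ⨆ m, θ (a m) ∂P

theorem expectedMax_comp_perm (P : Measure (ι → ℝ)) (a : Fin n → ι) (σ : Equiv.Perm (Fin n)) :
    expectedMax P (a ∘ σ) = expectedMax P a := by
  simp only [expectedMax, Function.comp_apply]
  congr 1 with θ
  exact σ.iSup_comp (g := fun m => θ (a m))

theorem integrable_ciSup_apply [Finite ι] [NeZero n] {P : Measure (ι → ℝ)}
    (hInt : Integrable (fun θ : ι → ℝ => ⨆ i, |θ i|) P) (a : Fin n → ι) :
    Integrable (fun θ : ι → ℝ => ⨆ m, θ (a m)) P :=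
  hInt.mono (Measurable.iSup fun m => measurable_pi_apply (a m)).aestronglyMeasurable
    (.of_forall fun θ => by
      simpa only [Real.norm_eq_abs] using (abs_ciSup_comp_le θ a).trans (le_abs_self _))

end ExpectedMax

section Remax

variable {K n : ℕ} {P : Measure (Fin K → ℝ)}

theorem remaxJ_eq_tensorForm [NeZero n]
    (hInt : Integrable (fun θ : Fin K → ℝ => ⨆ i, |θ i|) P) (w : Fin K → ℝ) :
    remaxJ K n P w = tensorForm (expectedMax P) fun _ : Fin n => w := by
  rw [remaxJ, tensorForm_apply,
    integral_finsetSum _ fun a _ => (integrable_ciSup_apply hInt a).const_mul _]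
  exact sum_congr rfl fun a _ => integral_const_mul _ _

theorem remaxSbar_succ_eq [NeZero n]
    (hInt : Integrable (fun θ : Fin K → ℝ => ⨆ i, |θ i|) P) (w : Fin K → ℝ) (i : Fin K) :
    remaxSbar K (n + 1) P w i = tensorFormGrad (n := n) (expectedMax P) w i - remaxJ K n P w := by
  have hpt : ∀ (θ : Fin K → ℝ) (b : Fin n → Fin K),
      max (θ i - ⨆ m, θ (b m)) 0
        = (⨆ m, θ (Fin.snoc (α := fun _ => Fin K) b i m)) - ⨆ m, θ (b m) := fun θ b => by
    rw [ciSup_comp_snoc, ← max_sub_sub_right, sub_self, max_comm]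
  have hint : ∀ b : Fin n → Fin K, Integrable
      (fun θ : Fin K → ℝ => (⨆ m, θ (Fin.snoc (α := fun _ => Fin K) b i m)) - ⨆ m, θ (b m)) P :=
    fun b => (integrable_ciSup_apply hInt _).sub (integrable_ciSup_apply hInt b)
  rw [remaxSbar, remaxJ_eq_tensorForm hInt, tensorForm_apply, tensorFormGrad, ← sum_sub_distrib]
  -- `remaxSbar` sums over `Fin (n + 1 - 1)`, which is `Fin n` only up to defeq: match, not rewrite
  refine (integral_congr_ae (.of_forall fun θ => sum_congr rfl fun b _ =>
    congrArg _ (hpt θ b))).trans ?_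
  rw [integral_finsetSum _ fun b _ => (hint b).const_mul _]
  refine sum_congr rfl fun b _ => ?_
  rw [integral_const_mul, integral_sub (integrable_ciSup_apply hInt _)
    (integrable_ciSup_apply hInt b), mul_sub]
  rfl

end Remax

theorem remax_expected_improvement_balance_general
    (K M : ℕ) (hM : 2 ≤ M)
    (P : Measure (Fin K → ℝ))
    (hInt : Integrable (fun θ : Fin K → ℝ => ⨆ i, |θ i|) P)
    (π : Fin K → ℝ) (hπ0 : ∀ i, 0 ≤ π i) (hπ1 : ∑ i, π i = 1)
    (hmax : ∀ π' : Fin K → ℝ, (∀ i, 0 ≤ π' i) → (∑ i, π' i = 1) →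
      remaxJ K M P π' ≤ remaxJ K M P π) :
    (∀ i j : Fin K, 0 < π i → 0 < π j →
      remaxSbar K M P π i = remaxSbar K M P π j) ∧
    (∀ j k : Fin K, 0 < π j → π k = 0 →
      remaxSbar K M P π k ≤ remaxSbar K M P π j) := by
  obtain ⟨n, rfl⟩ : ∃ n, M = n + 1 := ⟨M - 1, by omega⟩
  have : NeZero n := ⟨by omega⟩
  have hJmax : IsMaxOn (fun w => tensorForm (expectedMax P) fun _ : Fin (n + 1) => w)
      (stdSimplex ℝ (Fin K)) π := isMaxOn_iff.2 fun w hw => by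
    simpa only [remaxJ_eq_tensorForm hInt] using hmax w hw.1 hw.2
  have hgrad : ∀ i j, 0 < π i →
      tensorFormGrad (expectedMax P) π j ≤ tensorFormGrad (n := n) (expectedMax P) π i :=
    fun i j hi => le_of_mul_le_mul_left (le_of_isMaxOn_stdSimplex
      (hasFDerivAt_tensorForm_diag (expectedMax_comp_perm P) π) hJmax ⟨hπ0, hπ1⟩ hi j)
      (by positivity)
  simp only [remaxSbar_succ_eq hInt]
  exact ⟨fun i j hi hj => by linarith [hgrad i j hi, hgrad j i hj],
    fun j k hj _ => by linarith [hgrad j k hj]⟩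

/-- Expected-improvement balance condition at a maximizer of the ReMax objective:
all arms in the support have equal posterior-averaged marginal expected improvement,
and arms outside the support have no larger one. -/
theorem remax_expected_improvement_balance
    (K M : ℕ) (hK : 1 ≤ K) (hM : 2 ≤ M)
    (P : Measure (Fin K → ℝ)) [IsProbabilityMeasure P]
    (hInt : Integrable (fun θ : Fin K → ℝ => ⨆ i, |θ i|) P)
    (π : Fin K → ℝ) (hπ0 : ∀ i, 0 ≤ π i) (hπ1 : ∑ i, π i = 1)
    (hmax : ∀ π' : Fin K → ℝ, (∀ i, 0 ≤ π' i) → (∑ i, π' i = 1) →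
      remaxJ K M P π' ≤ remaxJ K M P π) :
    (∀ i j : Fin K, 0 < π i → 0 < π j →
      remaxSbar K M P π i = remaxSbar K M P π j) ∧
    (∀ j k : Fin K, 0 < π j → π k = 0 →
      remaxSbar K M P π k ≤ remaxSbar K M P π j) :=
  remax_expected_improvement_balance_general K M hM P hInt π hπ0 hπ1 hmax
end

section
/- Let n ≥ 1 be an integer, let ε > 0, and let μ₁, μ̂ ∈ ℝ with μ̂ ≤ μ₁ − ε. Set δ := μ₁ − ε − μ̂ ≥ 0 and define E := (1/4)·E_{θ∼N(μ̂, 1/n)}[ max(0, θ − (μ₁ − ε)) ]. Then E ≥ (1/(4√(2πn))) · (1/(3 + nδ²)) · exp(−n·δ²/2). -/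
/-!
For `X ∼ N(μ, v)` with density `p` and `d = a - μ`, the function
`G x = v * ((x - a) * (x - 2a + μ) - v) * p x` satisfies `G' = ((3v + d²)(x - a) - (x - a)³) p`
and `G a = -v² p a`. Integrating `G'` over `(a, ∞)` gives
`(3v + d²) E[(X - a)₊] = v² p(a) + E[(X - a)₊³] ≥ v² p(a)`;
with `v = 1/n` this is the bound.
-/

open MeasureTheory ProbabilityTheory Real Set
open scoped NNReal

namespace ProbabilityTheory

lemma hasDerivAt_gaussianPDFReal (μ : ℝ) (v : ℝ≥0) (x : ℝ) :
    HasDerivAt (gaussianPDFReal μ v) (-((x - μ) / v) * gaussianPDFReal μ v x) x := by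
  have hexp : HasDerivAt (fun y => -(y - μ) ^ 2 / (2 * v)) (-((x - μ) / v)) x := by
    refine ((((hasDerivAt_id' x).sub_const μ).pow 2).neg.div_const (2 * (v : ℝ))).congr_deriv ?_
    norm_num
    ring
  rw [gaussianPDFReal_def]
  exact (hexp.exp.const_mul _).congr_deriv (by ring)

lemma integrable_pow_sub_mul_gaussianPDFReal (μ : ℝ) (v : ℝ≥0) (a : ℝ) (k : ℕ) :
    Integrable (fun x => (x - a) ^ k * gaussianPDFReal μ v x) := by
  rcases eq_or_ne v 0 with rfl | hv
  · simp [gaussianPDFReal_zero_var]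
  have hmom : Integrable (fun x => (x - a) ^ k) (gaussianReal μ v) := by
    have := ((memLp_id_gaussianReal (μ := μ) (v := v) k).sub (memLp_const a)).integrable_norm_pow'
    refine this.mono' (by fun_prop) (ae_of_all _ fun x => ?_)
    simp [norm_pow]
  rw [gaussianReal_of_var_ne_zero _ hv, gaussianPDF_def,
    integrable_withDensity_iff_integrable_smul' (by fun_prop) (by simp)] at hmom
  simpa [mul_comm, gaussianPDFReal_nonneg] using hmom

lemma integrable_linear_sub_cube_mul_gaussianPDFReal (μ : ℝ) (v : ℝ≥0) (a c : ℝ) :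
    Integrable (fun x => (c * (x - a) - (x - a) ^ 3) * gaussianPDFReal μ v x) := by
  have hint := integrable_pow_sub_mul_gaussianPDFReal μ v a
  refine (((hint 1).const_mul c).sub (hint 3)).congr (ae_of_all _ fun x => ?_)
  simp only [Pi.sub_apply]; ring

lemma integral_Ioi_linear_sub_cube_mul_gaussianPDFReal {v : ℝ≥0} (hv : v ≠ 0) (μ a : ℝ) :
    ∫ x in Ioi a, ((3 * v + (a - μ) ^ 2) * (x - a) - (x - a) ^ 3) * gaussianPDFReal μ v x
      = v ^ 2 * gaussianPDFReal μ v a := by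
  set G : ℝ → ℝ := fun x => v * ((x - a) * (x - 2 * a + μ) - v) * gaussianPDFReal μ v x
  have hG : ∀ x, HasDerivAt G
      (((3 * v + (a - μ) ^ 2) * (x - a) - (x - a) ^ 3) * gaussianPDFReal μ v x) x := by
    intro x
    have hpoly : HasDerivAt (fun x : ℝ => v * ((x - a) * (x - 2 * a + μ) - v))
        (v * (2 * x - 3 * a + μ)) x := by
      refine ((((hasDerivAt_id' x).sub_const a).mul
        (((hasDerivAt_id' x).sub_const (2 * a)).add_const μ)).sub_const (v : ℝ)).const_mul
        (v : ℝ) |>.congr_deriv ?_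
      ring
    refine (hpoly.mul (hasDerivAt_gaussianPDFReal μ v x)).congr_deriv ?_
    have hv' : (v : ℝ) ≠ 0 := by exact_mod_cast hv
    field_simp
    ring
  have hint : ∀ k : ℕ, Integrable (fun x => (x - a) ^ k * gaussianPDFReal μ v x) :=
    integrable_pow_sub_mul_gaussianPDFReal μ v a
  have hG'int := integrable_linear_sub_cube_mul_gaussianPDFReal μ v a (3 * v + (a - μ) ^ 2)
  have hGint : Integrable G := by
    refine ((((hint 2).add ((hint 1).const_mul (μ - a))).sub ((hint 0).const_mul (v : ℝ))).const_mul
      (v : ℝ)).congr (ae_of_all _ fun x => ?_)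
    simp only [G, Pi.add_apply, Pi.sub_apply]; ring
  rw [integral_Ioi_of_hasDerivAt_of_tendsto' (fun x _ => hG x) hG'int.integrableOn
    (tendsto_zero_of_hasDerivAt_of_integrableOn_Ioi (a := a) (fun x _ => hG x)
      hG'int.integrableOn hGint.integrableOn)]
  simp only [G]
  ring

lemma integral_max_zero_sub_gaussianReal {v : ℝ≥0} (hv : v ≠ 0) (μ a : ℝ) :
    ∫ x, max 0 (x - a) ∂gaussianReal μ v = ∫ x in Ioi a, (x - a) * gaussianPDFReal μ v x := by
  rw [integral_gaussianReal_eq_integral_smul hv, ← integral_indicator measurableSet_Ioi]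
  congr 1 with x
  by_cases hx : a < x
  · simp [indicator_of_mem (show x ∈ Ioi a from hx), max_eq_right (sub_nonneg.2 hx.le), mul_comm]
  · simp [indicator_of_notMem (show x ∉ Ioi a from hx), max_eq_left (sub_nonpos.2 (not_lt.1 hx))]

theorem sq_mul_gaussianPDFReal_le_mul_integral_max_zero_sub {v : ℝ≥0} (hv : v ≠ 0) (μ a : ℝ) :
    v ^ 2 * gaussianPDFReal μ v a
      ≤ (3 * v + (a - μ) ^ 2) * ∫ x, max 0 (x - a) ∂gaussianReal μ v := by
  rw [← integral_Ioi_linear_sub_cube_mul_gaussianPDFReal hv, integral_max_zero_sub_gaussianReal hv,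
    ← integral_const_mul]
  refine setIntegral_mono_on ?_ ?_ measurableSet_Ioi fun x hx => ?_
  · exact (integrable_linear_sub_cube_mul_gaussianPDFReal μ v a _).integrableOn
  · simpa using ((integrable_pow_sub_mul_gaussianPDFReal μ v a 1).const_mul
      (3 * v + (a - μ) ^ 2)).integrableOn
  · have : 0 ≤ (x - a) ^ 3 * gaussianPDFReal μ v x :=
      mul_nonneg (pow_nonneg (sub_nonneg.2 (le_of_lt hx)) 3) (gaussianPDFReal_nonneg μ v x)
    linarith

end ProbabilityTheory

theorem expected_improvement_lower_bound_general
    (n : ℕ) (hn : 1 ≤ n) (ε : ℝ) (μ₁ μhat : ℝ) :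
    (1 / (4 * Real.sqrt (2 * Real.pi * n))) *
        (1 / (3 + n * (μ₁ - ε - μhat) ^ 2)) *
        Real.exp (-(n : ℝ) * (μ₁ - ε - μhat) ^ 2 / 2)
      ≤ (1 / 4) * ∫ θ, max 0 (θ - (μ₁ - ε)) ∂(gaussianReal μhat ((n : ℝ≥0))⁻¹) := by
  have hn0 : (0 : ℝ) < n := by exact_mod_cast hn
  have hv : ((n : ℝ≥0))⁻¹ ≠ 0 := inv_ne_zero (by exact_mod_cast (by omega : n ≠ 0))
  have key := sq_mul_gaussianPDFReal_le_mul_integral_max_zero_sub hv μhat (μ₁ - ε)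
  rw [← div_le_iff₀' (by positivity)] at key
  have hsn : √(n : ℝ) ^ 2 = n := Real.sq_sqrt hn0.le
  have hpdf : gaussianPDFReal μhat (n : ℝ≥0)⁻¹ (μ₁ - ε)
      = √n / √(2 * π) * Real.exp (-(n : ℝ) * (μ₁ - ε - μhat) ^ 2 / 2) := by
    rw [gaussianPDFReal_def]
    push_cast
    rw [Real.sqrt_mul (by positivity), Real.sqrt_inv]
    field_simp
  calc _ = 1 / 4 * (((n : ℝ≥0)⁻¹ : ℝ≥0) ^ 2 * gaussianPDFReal μhat (n : ℝ≥0)⁻¹ (μ₁ - ε)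
        / (3 * ((n : ℝ≥0)⁻¹ : ℝ≥0) + (μ₁ - ε - μhat) ^ 2)) := by
        rw [hpdf, Real.sqrt_mul (by positivity)]
        push_cast
        field_simp
        exact hsn.symm
    _ ≤ _ := by gcongr

/-- Lower bound on the (quarter of the) expected improvement of an underestimated arm:
if `μ̂ ≤ μ₁ − ε` and `E := (1/4)·E_{θ∼N(μ̂, 1/n)}[max(0, θ − (μ₁ − ε))]`, then with
`δ := μ₁ − ε − μ̂`,
`E ≥ (1/(4√(2πn))) · (1/(3 + nδ²)) · exp(−nδ²/2)`. -/
theorem expected_improvement_lower_bound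
    (n : ℕ) (hn : 1 ≤ n) (ε : ℝ) (hε : 0 < ε) (μ₁ μhat : ℝ)
    (hunder : μhat ≤ μ₁ - ε) :
    (1 / (4 * Real.sqrt (2 * Real.pi * n))) *
        (1 / (3 + n * (μ₁ - ε - μhat) ^ 2)) *
        Real.exp (-(n : ℝ) * (μ₁ - ε - μhat) ^ 2 / 2)
      ≤ (1 / 4) * ∫ θ, max 0 (θ - (μ₁ - ε)) ∂(gaussianReal μhat ((n : ℝ≥0))⁻¹) :=
  expected_improvement_lower_bound_general n hn ε μ₁ μhat
end

section
/- Let n > 0 and let N_i, N_j ≥ n. Let θ_i and θ_j be independent Gaussian random variables with θ_i ∼ N(m_i, 1/N_i) and θ_j ∼ N(m_j, 1/N_j), where m_i ≥ m_j. Then E[max(θ_j − θ_i, 0)] ≤ 1/√(πn). -/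
open MeasureTheory ProbabilityTheory
open scoped NNReal

/-!
The difference `θ_j - θ_i` of independent Gaussians is Gaussian with mean `m_j - m_i ≤ 0` and
variance `1/N_i + 1/N_j ≤ 2/n`. Shifting the mean up to `0` can only increase the expected
positive part, and for a centred Gaussian of variance `v` the expected positive part is
`√(v / (2π))`, obtained from the primitive `-(2b)⁻¹ exp (-b r²)` of `r exp (-b r²)`.
-/

open Real Set

lemma integral_Ioi_mul_exp_neg_mul_sq {b : ℝ} (hb : 0 < b) :
    ∫ r in Ioi (0 : ℝ), r * exp (-b * r ^ 2) = (2 * b)⁻¹ := by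
  have h := integral_mul_cexp_neg_mul_sq (b := (b : ℂ)) (by simpa using hb)
  rw [← Complex.ofReal_ofNat, ← Complex.ofReal_mul, ← Complex.ofReal_inv] at h
  rw [← Complex.ofReal_inj, ← h, ← integral_complex_ofReal]
  push_cast
  rfl

lemma gaussianReal_prod_map_sub (m₁ m₂ : ℝ) (v₁ v₂ : ℝ≥0) :
    ((gaussianReal m₁ v₁).prod (gaussianReal m₂ v₂)).map (fun p ↦ p.2 - p.1)
      = gaussianReal (m₂ - m₁) (v₁ + v₂) := by
  calc _ = Measure.map (fun p ↦ p.1 + p.2)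
          (((gaussianReal m₁ v₁).map (fun x ↦ -x)).prod
            ((gaussianReal m₂ v₂).map id)) := by
        rw [Measure.map_prod_map _ _ (by fun_prop) (by fun_prop),
          Measure.map_map (by fun_prop) (by fun_prop)]
        congr 1
        ext p
        simp [sub_eq_neg_add]
    _ = gaussianReal (m₂ - m₁) (v₁ + v₂) := by
        rw [gaussianReal_map_neg, Measure.map_id, ← Measure.conv, gaussianReal_conv_gaussianReal,
          neg_add_eq_sub]

lemma integral_posPart_gaussianReal_zero (v : ℝ≥0) :
    ∫ x, max x 0 ∂gaussianReal 0 v = √(v / (2 * π)) := by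
  rcases eq_or_ne v 0 with rfl | hv
  · simp [gaussianReal_zero_var]
  have hv' : (0 : ℝ) < v := by positivity
  have hpdf : ∀ x,
      gaussianPDFReal 0 v x = (√(2 * π * v))⁻¹ * exp (-(2 * v : ℝ)⁻¹ * x ^ 2) := by
    intro x
    simp only [gaussianPDFReal, sub_zero]
    congr 2
    field_simp
  rw [integral_gaussianReal_eq_integral_smul hv,
    ← setIntegral_eq_integral_of_forall_compl_eq_zero (s := Ioi 0) fun x hx ↦ by
      simp [max_eq_right (not_lt.mp (show ¬0 < x from hx))],
    setIntegral_congr_fun measurableSet_Ioi fun x (hx : 0 < x) ↦ by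
      rw [smul_eq_mul, max_eq_left hx.le, hpdf, mul_right_comm, mul_assoc],
    integral_const_mul, integral_Ioi_mul_exp_neg_mul_sq (by positivity)]
  rw [← sqrt_inv,
    show (2 * (2 * (v : ℝ))⁻¹)⁻¹ = √((v : ℝ) ^ 2) by rw [sqrt_sq hv'.le]; field_simp,
    ← sqrt_mul (by positivity)]
  congr 1
  field_simp

lemma integral_posPart_gaussianReal_mono {μ μ' : ℝ} (h : μ ≤ μ') (v : ℝ≥0) :
    ∫ x, max x 0 ∂gaussianReal μ v ≤ ∫ x, max x 0 ∂gaussianReal μ' v := by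
  have hint : ∀ c : ℝ, Integrable (fun x ↦ max (x + c) 0) (gaussianReal 0 v) := fun c ↦
    ((memLp_id_gaussianReal 1).integrable le_rfl |>.add (integrable_const c)).pos_part
  have hshift : ∀ c, gaussianReal c v = (gaussianReal 0 v).map (· + c) := fun c ↦ by
    rw [gaussianReal_map_add_const, zero_add]
  rw [hshift μ, hshift μ', integral_map (by fun_prop) (by fun_prop),
    integral_map (by fun_prop) (by fun_prop)]
  exact integral_mono (hint μ) (hint μ') fun x ↦ by gcongr

lemma integral_posPart_gaussianReal_le {μ : ℝ} (hμ : μ ≤ 0) (v : ℝ≥0) :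
    ∫ x, max x 0 ∂gaussianReal μ v ≤ √(v / (2 * π)) :=
  integral_posPart_gaussianReal_zero v ▸ integral_posPart_gaussianReal_mono hμ v

/-- Bound on the pairwise expected improvement for sufficiently-sampled arms:
if `θ_i ∼ N(m_i, 1/N_i)` and `θ_j ∼ N(m_j, 1/N_j)` are independent with
`N_i, N_j ≥ n > 0` and `m_i ≥ m_j`, then `E[max(θ_j − θ_i, 0)] ≤ 1/√(π n)`. -/
theorem expected_improvement_large_n_bound
    (n Ni Nj : ℝ) (hn : 0 < n) (hNi : n ≤ Ni) (hNj : n ≤ Nj)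
    (mi mj : ℝ) (hm : mj ≤ mi) :
    ∫ p : ℝ × ℝ, max (p.2 - p.1) 0
        ∂((gaussianReal mi (Ni⁻¹).toNNReal).prod (gaussianReal mj (Nj⁻¹).toNNReal))
      ≤ 1 / Real.sqrt (Real.pi * n) := by
  have hvar : ((Ni⁻¹).toNNReal + (Nj⁻¹).toNNReal : ℝ) ≤ 2 / n := by
    have hi : Ni⁻¹ ≤ n⁻¹ := inv_anti₀ hn hNi
    have hj : Nj⁻¹ ≤ n⁻¹ := inv_anti₀ hn hNj
    rw [Real.coe_toNNReal _ (inv_nonneg.2 (hn.le.trans hNi)),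
      Real.coe_toNNReal _ (inv_nonneg.2 (hn.le.trans hNj))]
    linarith [div_eq_mul_inv 2 n]
  rw [← integral_map (f := fun s ↦ max s 0) (by fun_prop) (by fun_prop),
    gaussianReal_prod_map_sub]
  calc _ ≤ √(((Ni⁻¹).toNNReal + (Nj⁻¹).toNNReal : ℝ≥0) / (2 * π)) :=
        integral_posPart_gaussianReal_le (by linarith) _
    _ ≤ √(2 / n / (2 * π)) := by gcongr; exact_mod_cast hvar
    _ = 1 / √(π * n) := by rw [one_div, ← sqrt_inv]; congr 1; field_simp
end

section
/- Let K ≥ 2, let θ_1, …, θ_K be independent Gaussian random variables with θ_i ∼ N(μ̂_i, 1/N_i) for integers N_i ≥ 1, and let π ∈ Δ^{K-1}. Fix ε > 0 and μ₁ ∈ ℝ, and define E := (1/4)·E[ max(θ_1 − (μ₁ − ε), 0) ]. Suppose B ⊆ {2, …, K} is a set of arms, not containing arm 1, such that μ̂_i ≤ μ₁ − ε for every i ∈ B and Σ_{i∈B} π_i ≥ 1/2. Then Σ_{i≠1} π_i · E[max(θ_1 − θ_i, 0)] ≥ E. In particular, for each i ∈ B, E[max(θ_1 − θ_i, 0)]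 ≥ 2E. -/
open MeasureTheory ProbabilityTheory
open scoped NNReal

/-- The joint posterior: independent Gaussian coordinates `θ_i ∼ N(μ̂_i, 1/N_i)`. -/
noncomputable def gaussPosterior (K : ℕ) (μhat : Fin K → ℝ) (N : Fin K → ℕ) :
    Measure (Fin K → ℝ) :=
  Measure.pi fun i => gaussianReal (μhat i) ((N i : ℝ≥0))⁻¹

/-!
Write `c = μ₁ - ε`. On the event `θ_i ≤ c` the improvement `(θ_1 - θ_i)⁺` dominates
`(θ_1 - c)⁺`, and `θ_1`, `θ_i` are independent, so
`E (θ_1 - θ_i)⁺ ≥ P(θ_i ≤ c) · E (θ_1 - c)⁺`. For `i ∈ B` the Gaussian `θ_i` has median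
`μ̂_i ≤ c`, so that probability is at least `1/2`; averaging over `B`, which carries `π`-mass at
least `1/2`, gives the factor `1/4`.
-/

open Set

theorem one_half_le_gaussianReal_real_Iic {m c : ℝ} (v : ℝ≥0) (hmc : m ≤ c) :
    1 / 2 ≤ (gaussianReal m v).real (Iic c) := by
  have hreflect : (gaussianReal m v).map (2 * m - ·) = gaussianReal m v := by
    rw [gaussianReal_map_const_sub]
    ring_nf
  set γ := gaussianReal m v
  have hsymm : γ.real (Ici m) = γ.real (Iic m) := by
    conv_lhs => rw [← hreflect]
    rw [map_measureReal_apply (by fun_prop) measurableSet_Ici]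
    congr 1
    ext x
    simp only [mem_preimage, mem_Ici, mem_Iic]
    constructor <;> intro <;> linarith
  have hcover : 1 ≤ γ.real (Iic m) + γ.real (Ici m) := by
    simpa [Iic_union_Ici] using measureReal_union_le (μ := γ) (Iic m) (Ici m)
  have hmono : γ.real (Iic m) ≤ γ.real (Iic c) := measureReal_mono (Iic_subset_Iic.2 hmc)
  linarith

section Independence

variable {Ω : Type*} [MeasurableSpace Ω] {μ : Measure Ω} [IsFiniteMeasure μ] {X Y : Ω → ℝ}

theorem ProbabilityTheory.IndepFun.measureReal_map_Iic_mul_integral_max_sub_le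
    (hXY : IndepFun X Y μ) (hX : Integrable X μ) (hY : Integrable Y μ) (c : ℝ) :
    (μ.map Y).real (Iic c) * ∫ ω, max (X ω - c) 0 ∂μ ≤ ∫ ω, max (X ω - Y ω) 0 ∂μ := by
  set φ : ℝ → ℝ := (Iic c).indicator 1
  have hφ : Measurable φ := measurable_one.indicator measurableSet_Iic
  have hfactor : ∫ ω, φ (Y ω) * max (X ω - c) 0 ∂μ
      = (μ.map Y).real (Iic c) * ∫ ω, max (X ω - c) 0 ∂μ := by
    rw [hXY.symm.integral_fun_comp_mul_comp (g := fun x => max (x - c) 0) hY.aemeasurable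
      hX.aemeasurable hφ.aestronglyMeasurable (by fun_prop),
      ← integral_map hY.aemeasurable hφ.aestronglyMeasurable,
      integral_indicator_one measurableSet_Iic]
  have hint : Integrable (fun ω => φ (Y ω) * max (X ω - c) 0) μ := by
    refine (hX.sub (integrable_const c)).pos_part.bdd_mul (c := 1)
      (hφ.comp_aemeasurable hY.aemeasurable).aestronglyMeasurable (ae_of_all _ fun ω => ?_)
    by_cases h : Y ω ≤ c <;> simp [φ, h]
  have hdom : ∀ ω, φ (Y ω) * max (X ω - c) 0 ≤ max (X ω - Y ω) 0 := by
    intro ω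
    by_cases h : Y ω ≤ c
    · simp only [φ, indicator_of_mem (mem_Iic.2 h), Pi.one_apply, one_mul]
      exact max_le_max (sub_le_sub_left h _) le_rfl
    · simp [φ, h]
  rw [← hfactor]
  exact integral_mono hint (hX.sub hY).pos_part hdom

end Independence

section Posterior

variable {K : ℕ} (μhat : Fin K → ℝ) (N : Fin K → ℕ)

instance : IsProbabilityMeasure (gaussPosterior K μhat N) := by
  unfold gaussPosterior
  infer_instance

theorem measurePreserving_eval_gaussPosterior (j : Fin K) :
    MeasurePreserving (fun θ => θ j) (gaussPosterior K μhat N)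
      (gaussianReal (μhat j) (N j : ℝ≥0)⁻¹) :=
  measurePreserving_eval _ j

theorem iIndepFun_eval_gaussPosterior :
    iIndepFun (fun j (θ : Fin K → ℝ) => θ j) (gaussPosterior K μhat N) :=
  iIndepFun_pi (X := fun _ => id) fun _ => aemeasurable_id

theorem integrable_eval_gaussPosterior (j : Fin K) :
    Integrable (fun θ => θ j) (gaussPosterior K μhat N) :=
  (measurePreserving_eval_gaussPosterior μhat N j).integrable_comp_of_integrable
    IsGaussian.integrable_id

theorem half_mul_integral_max_eval_sub_le {k i : Fin K} (hki : k ≠ i) {c : ℝ}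
    (hic : μhat i ≤ c) :
    1 / 2 * ∫ θ, max (θ k - c) 0 ∂(gaussPosterior K μhat N)
      ≤ ∫ θ, max (θ k - θ i) 0 ∂(gaussPosterior K μhat N) := by
  have hbound := IndepFun.measureReal_map_Iic_mul_integral_max_sub_le
    ((iIndepFun_eval_gaussPosterior μhat N).indepFun hki)
    (integrable_eval_gaussPosterior μhat N k) (integrable_eval_gaussPosterior μhat N i) c
  rw [(measurePreserving_eval_gaussPosterior μhat N i).map_eq] at hbound
  calc 1 / 2 * ∫ θ, max (θ k - c) 0 ∂(gaussPosterior K μhat N)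
      ≤ (gaussianReal (μhat i) (N i : ℝ≥0)⁻¹).real (Iic c)
          * ∫ θ, max (θ k - c) 0 ∂(gaussPosterior K μhat N) :=
        mul_le_mul_of_nonneg_right (one_half_le_gaussianReal_real_Iic _ hic)
          (integral_nonneg fun _ => le_max_right _ _)
    _ ≤ _ := hbound

end Posterior

theorem expected_improvement_arm1_lower_bound_general
    (K : ℕ)
    (μhat : Fin K → ℝ) (N : Fin K → ℕ)
    (π : Fin K → ℝ) (hπ0 : ∀ i, 0 ≤ π i)
    (ε : ℝ) (μ₁ : ℝ)
    (i1 : Fin K)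
    (B : Finset (Fin K)) (hB1 : i1 ∉ B)
    (hBμ : ∀ i ∈ B, μhat i ≤ μ₁ - ε)
    (hBπ : 1 / 2 ≤ ∑ i ∈ B, π i) :
    ((1 / 4) * ∫ θ, max (θ i1 - (μ₁ - ε)) 0 ∂(gaussPosterior K μhat N)
        ≤ ∑ i ∈ Finset.univ.erase i1,
            π i * ∫ θ, max (θ i1 - θ i) 0 ∂(gaussPosterior K μhat N)) ∧
    (∀ i ∈ B,
      2 * ((1 / 4) * ∫ θ, max (θ i1 - (μ₁ - ε)) 0 ∂(gaussPosterior K μhat N))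
        ≤ ∫ θ, max (θ i1 - θ i) 0 ∂(gaussPosterior K μhat N)) := by
  set P := gaussPosterior K μhat N
  set I := ∫ θ, max (θ i1 - (μ₁ - ε)) 0 ∂P
  have hB : ∀ i ∈ B, 1 / 2 * I ≤ ∫ θ, max (θ i1 - θ i) 0 ∂P := fun i hi =>
    half_mul_integral_max_eval_sub_le μhat N (ne_of_mem_of_not_mem hi hB1).symm (hBμ i hi)
  refine ⟨?_, fun i hi => by linarith [hB i hi]⟩
  have hsub : B ⊆ Finset.univ.erase i1 := fun i hi =>
    Finset.mem_erase.2 ⟨ne_of_mem_of_not_mem hi hB1, Finset.mem_univ i⟩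
  calc 1 / 4 * I = 1 / 2 * (1 / 2 * I) := by ring
    _ ≤ (∑ i ∈ B, π i) * (1 / 2 * I) := mul_le_mul_of_nonneg_right hBπ (by positivity)
    _ = ∑ i ∈ B, π i * (1 / 2 * I) := Finset.sum_mul _ _ _
    _ ≤ ∑ i ∈ B, π i * ∫ θ, max (θ i1 - θ i) 0 ∂P :=
        Finset.sum_le_sum fun i hi => mul_le_mul_of_nonneg_left (hB i hi) (hπ0 i)
    _ ≤ ∑ i ∈ Finset.univ.erase i1, π i * ∫ θ, max (θ i1 - θ i) 0 ∂P :=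
        Finset.sum_le_sum_of_subset_of_nonneg hsub fun i _ _ =>
          mul_nonneg (hπ0 i) (integral_nonneg fun _ => le_max_right _ _)

/-- Lower bound on the expected improvement of the (underestimated) arm 1:
if the arms in `B` (not containing arm 1) all have empirical means at most `μ₁ − ε` and
carry total probability mass at least `1/2` under `π`, then the `M = 2`
posterior-averaged marginal expected improvement of arm 1 is at least
`E := (1/4)·E[max(θ_1 − (μ₁ − ε), 0)]`; in particular each arm `i ∈ B` satisfies
`E[max(θ_1 − θ_i, 0)] ≥ 2E`. -/
theorem expected_improvement_arm1_lower_bound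
    (K : ℕ) (hK : 2 ≤ K)
    (μhat : Fin K → ℝ) (N : Fin K → ℕ) (hN : ∀ i, 1 ≤ N i)
    (π : Fin K → ℝ) (hπ0 : ∀ i, 0 ≤ π i) (hπ1 : ∑ i, π i = 1)
    (ε : ℝ) (hε : 0 < ε) (μ₁ : ℝ)
    (i1 : Fin K) (hi1 : (i1 : ℕ) = 0)
    (B : Finset (Fin K)) (hB1 : i1 ∉ B)
    (hBμ : ∀ i ∈ B, μhat i ≤ μ₁ - ε)
    (hBπ : 1 / 2 ≤ ∑ i ∈ B, π i) :
    ((1 / 4) * ∫ θ, max (θ i1 - (μ₁ - ε)) 0 ∂(gaussPosterior K μhat N)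
        ≤ ∑ i ∈ Finset.univ.erase i1,
            π i * ∫ θ, max (θ i1 - θ i) 0 ∂(gaussPosterior K μhat N)) ∧
    (∀ i ∈ B,
      2 * ((1 / 4) * ∫ θ, max (θ i1 - (μ₁ - ε)) 0 ∂(gaussPosterior K μhat N))
        ≤ ∫ θ, max (θ i1 - θ i) 0 ∂(gaussPosterior K μhat N)) :=
  expected_improvement_arm1_lower_bound_general K μhat N π hπ0 ε μ₁ i1 B hB1 hBμ hBπ
end

section
/- Let θ_1, θ_j, θ_k be independent Gaussian random variables with θ_1 ∼ N(μ̂_1, 1/N_1), θ_j ∼ N(μ̂_j, 1/N_j), θ_k ∼ N(μ̂_k, 1/N_k), where N_1, N_j, N_k ≥ 1. If μ̂_1 ≥ μ̂_j and N_1 ≤ N_j, then E[max(θ_1 − θ_k, 0)] ≥ E[max(θ_j − θ_k, 0)]. Consequently, for any nonnegative weights π_k indexed by arms k ∉ {1, j}, Σ_{k∉{1,j}} π_k · ( E[max(θ_1 − θ_k, 0)] − E[max(θ_j − θ_k, 0)] ) ≥ 0. -/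
/-!
Under the product posterior, `θ_i − θ_k ∼ N(μ̂_i − μ̂_k, 1/N_i + 1/N_k)`, so both sides are
`E[max(Z, 0)]` for a Gaussian `Z`. Since `N(m₂, v₂) = N(m₁, v₁) ∗ N(m₂ − m₁, v₂ − v₁)`, Jensen's
inequality for the convex nondecreasing function `max(·, 0)`, applied to the second factor
(whose mean is `m₂ − m₁ ≥ 0`), shows that `E[max(Z, 0)]` grows with both the mean and the variance.
-/

open MeasureTheory ProbabilityTheory
open scoped NNReal

/-- The pairwise expected improvement `G_{i,k} = E[max(θ_i − θ_k, 0)]`. -/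
noncomputable def pairEI (K : ℕ) (μhat : Fin K → ℝ) (N : Fin K → ℕ)
    (i k : Fin K) : ℝ :=
  ∫ θ, max (θ i - θ k) 0 ∂(gaussPosterior K μhat N)

theorem ConvexOn.le_integral_comp_add {g : ℝ → ℝ} (hconv : ConvexOn ℝ Set.univ g)
    (hmono : Monotone g) {ν : Measure ℝ} [IsProbabilityMeasure ν] (hν : Integrable id ν)
    (hmean : 0 ≤ ∫ w, w ∂ν) (x : ℝ) (hg : Integrable (fun w => g (x + w)) ν) :
    g x ≤ ∫ w, g (x + w) ∂ν := by
  calc g x ≤ g (∫ w, (x + w) ∂ν) := by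
        apply hmono
        have hν' : Integrable (fun w => w) ν := hν
        rw [integral_add (integrable_const x) hν', integral_const]
        simpa using hmean
    _ ≤ ∫ w, g (x + w) ∂ν :=
        hconv.map_integral_le (hconv.continuousOn isOpen_univ) isClosed_univ
          (ae_of_all _ fun _ => Set.mem_univ _) ((integrable_const x).add hν) hg

theorem ConvexOn.integral_le_integral_conv {g : ℝ → ℝ} (hconv : ConvexOn ℝ Set.univ g)
    (hmono : Monotone g) {μ ν : Measure ℝ} [IsProbabilityMeasure μ] [IsProbabilityMeasure ν]
    (hν : Integrable id ν) (hmean : 0 ≤ ∫ w, w ∂ν) (hμg : Integrable g μ)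
    (hg : Integrable g (μ ∗ ν)) :
    ∫ x, g x ∂μ ≤ ∫ x, g x ∂(μ ∗ ν) := by
  have hprod : Integrable (fun p : ℝ × ℝ => g (p.1 + p.2)) (μ.prod ν) :=
    (integrable_map_measure hg.1 (by fun_prop)).mp hg
  rw [integral_conv hg]
  refine integral_mono_ae hμg hprod.integral_prod_left ?_
  filter_upwards [hprod.prod_right_ae] with x hx
  exact hconv.le_integral_comp_add hmono hν hmean x hx

lemma integrable_id_gaussianReal (m : ℝ) (v : ℝ≥0) : Integrable id (gaussianReal m v) :=
  memLp_one_iff_integrable.mp (memLp_id_gaussianReal 1)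

theorem ConvexOn.integral_gaussianReal_mono {g : ℝ → ℝ} (hconv : ConvexOn ℝ Set.univ g)
    (hmono : Monotone g) {m₁ m₂ : ℝ} {v₁ v₂ : ℝ≥0} (hm : m₁ ≤ m₂) (hv : v₁ ≤ v₂)
    (hg₁ : Integrable g (gaussianReal m₁ v₁)) (hg₂ : Integrable g (gaussianReal m₂ v₂)) :
    ∫ x, g x ∂gaussianReal m₁ v₁ ≤ ∫ x, g x ∂gaussianReal m₂ v₂ := by
  have hsplit : gaussianReal m₁ v₁ ∗ gaussianReal (m₂ - m₁) (v₂ - v₁) = gaussianReal m₂ v₂ := by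
    rw [gaussianReal_conv_gaussianReal, add_sub_cancel, add_tsub_cancel_of_le hv]
  rw [← hsplit] at hg₂ ⊢
  refine hconv.integral_le_integral_conv hmono (integrable_id_gaussianReal _ _) ?_ hg₁ hg₂
  rw [integral_id_gaussianReal]
  exact sub_nonneg.mpr hm

lemma gaussPosterior_map_sub (K : ℕ) (μhat : Fin K → ℝ) (N : Fin K → ℕ) {i k : Fin K}
    (hik : i ≠ k) :
    (gaussPosterior K μhat N).map (fun θ => θ i - θ k)
      = gaussianReal (μhat i - μhat k) ((N i : ℝ≥0)⁻¹ + (N k : ℝ≥0)⁻¹) := by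
  set G : Fin K → Measure ℝ := fun j => gaussianReal (μhat j) ((N j : ℝ≥0))⁻¹
  have hind : IndepFun (fun θ : Fin K → ℝ => θ i) (fun θ => -θ k) (Measure.pi G) :=
    ((iIndepFun_pi (X := fun _ => id) fun _ => aemeasurable_id).indepFun hik).comp
      measurable_id measurable_neg
  have hi : (Measure.pi G).map (fun θ => θ i) = G i := (measurePreserving_eval G i).map_eq
  have hk : (Measure.pi G).map (fun θ => -θ k) = gaussianReal (-μhat k) ((N k : ℝ≥0))⁻¹ := by
    rw [← gaussianReal_map_neg]
    change _ = (G k).map _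
    rw [← (measurePreserving_eval G k).map_eq,
      Measure.map_map (g := fun x : ℝ => -x) measurable_neg (measurable_pi_apply k)]
    rfl
  rw [sub_eq_add_neg (μhat i), ← gaussianReal_add_gaussianReal_of_indepFun hind hi hk]
  rfl

lemma pairEI_eq_integral_gaussianReal (K : ℕ) (μhat : Fin K → ℝ) (N : Fin K → ℕ)
    {i k : Fin K} (hik : i ≠ k) :
    pairEI K μhat N i k
      = ∫ z, max z 0 ∂gaussianReal (μhat i - μhat k) ((N i : ℝ≥0)⁻¹ + (N k : ℝ≥0)⁻¹) := by
  rw [pairEI, ← gaussPosterior_map_sub K μhat N hik, integral_map (by fun_prop) (by fun_prop)]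

theorem dominance_general
    (K : ℕ) (μhat : Fin K → ℝ) (N : Fin K → ℕ) (hN : ∀ i, 1 ≤ N i)
    (a b : Fin K)
    (hμ : μhat b ≤ μhat a) (hNab : N a ≤ N b) :
    (∀ k : Fin K, k ≠ a → k ≠ b →
      pairEI K μhat N b k ≤ pairEI K μhat N a k) ∧
    (∀ π : Fin K → ℝ, (∀ k, 0 ≤ π k) →
      0 ≤ ∑ k ∈ (Finset.univ.erase a).erase b,
            π k * (pairEI K μhat N a k - pairEI K μhat N b k)) := by
  have hpair (k : Fin K) (hka : k ≠ a) (hkb : k ≠ b) :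
      pairEI K μhat N b k ≤ pairEI K μhat N a k := by
    rw [pairEI_eq_integral_gaussianReal K μhat N hkb.symm,
      pairEI_eq_integral_gaussianReal K μhat N hka.symm]
    have hNa : (0 : ℝ≥0) < N a := by exact_mod_cast hN a
    have hvar : (N b : ℝ≥0)⁻¹ + (N k : ℝ≥0)⁻¹ ≤ (N a : ℝ≥0)⁻¹ + (N k : ℝ≥0)⁻¹ := by
      gcongr
    have hconv : ConvexOn ℝ Set.univ fun z : ℝ => max z 0 :=
      (convexOn_id convex_univ).sup (convexOn_const 0 convex_univ)
    exact hconv.integral_gaussianReal_mono (monotone_id.max monotone_const) (by linarith) hvar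
      (integrable_id_gaussianReal _ _).pos_part (integrable_id_gaussianReal _ _).pos_part
  refine ⟨hpair, fun π hπ => Finset.sum_nonneg fun k hk => ?_⟩
  obtain ⟨hkb, hk⟩ := Finset.mem_erase.mp hk
  exact mul_nonneg (hπ k) (sub_nonneg.mpr (hpair k (Finset.ne_of_mem_erase hk) hkb))

/-- Dominance: if `μ̂_1 ≥ μ̂_j` and `N_1 ≤ N_j`, then for every third arm `k`
`E[max(θ_1 − θ_k, 0)] ≥ E[max(θ_j − θ_k, 0)]`; consequently, for any nonnegative weights
`π_k` over arms `k ∉ {1, j}`, `Σ_k π_k (G_{1,k} − G_{j,k}) ≥ 0`. -/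
theorem dominance
    (K : ℕ) (μhat : Fin K → ℝ) (N : Fin K → ℕ) (hN : ∀ i, 1 ≤ N i)
    (a b : Fin K) (hab : a ≠ b)
    (hμ : μhat b ≤ μhat a) (hNab : N a ≤ N b) :
    (∀ k : Fin K, k ≠ a → k ≠ b →
      pairEI K μhat N b k ≤ pairEI K μhat N a k) ∧
    (∀ π : Fin K → ℝ, (∀ k, 0 ≤ π k) →
      0 ≤ ∑ k ∈ (Finset.univ.erase a).erase b,
            π k * (pairEI K μhat N a k - pairEI K μhat N b k)) :=
  dominance_general K μhat N hN a b hμ hNab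
end
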